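/- Let v be a hidden node of G and let b_v ∈ ℝ^E be the v-th row of B̃, i.e., (b_v)_e = 1 if e enters v, (b_v)_e = −1 if e leaves v, and 0 otherwise. If L : ℝ^E → ℝ is twice continuously differentiable and satisfies L(T^v_α(θ)) = L(θ) for every θ ∈ ℝ^E and every α > 0, then for every θ ∈ ℝ^E the Hessian and gradient of L satisfy Hess L(θ)·(θ ⊙ b_v) + ∇L(θ) ⊙ b_v = 0, where ⊙ denotes the entrywise (Hadamard) product. -/

import Mathlib

noncomputable section

open Matrix Finset

/-- A finite DAG modeling a feed-forward neural architecture: nodes `V`,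
edges `edges`, input nodes `VI` (no incoming edges), output nodes `VO`
(no outgoing edges), with `VI` and `VO` disjoint. -/
structure DagNet where
  V : Type
  [fintypeV : Fintype V]
  [decEqV : DecidableEq V]
  edges : Finset (V × V)
  VI : Finset V
  VO : Finset V
  acyclic : ∀ v : V, ¬ Relation.TransGen (fun a b : V => (a, b) ∈ edges) v v
  no_edge_into_input : ∀ e ∈ edges, Prod.snd e ∉ VI
  no_edge_from_output : ∀ e ∈ edges, Prod.fst e ∉ VO
  io_disjoint : Disjoint VI VO

attribute [instance] DagNet.fintypeV DagNet.decEqV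

namespace DagNet

variable (G : DagNet)

/-- The hidden nodes `Ṽ = V \ (V_I ∪ V_O)`. -/
def hidden : Finset G.V := Finset.univ \ (G.VI ∪ G.VO)

/-- The type of hidden nodes. -/
abbrev Hidden : Type := {v : G.V // v ∈ G.hidden}

/-- The type of edges. -/
abbrev Edge : Type := {e : G.V × G.V // e ∈ G.edges}

/-- The incidence matrix `B̃` of `G` restricted to hidden rows:
`B̃_{v,(i,j)} = 1` if `v = j`, `-1` if `v = i`, `0` otherwise. -/
def B : Matrix G.Hidden G.Edge ℝ :=
  Matrix.of fun v e =>
    if (e : G.V × G.V).2 = (v : G.V) then 1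
    else if (e : G.V × G.V).1 = (v : G.V) then -1 else 0

/-- The rescaling action `T^v_α`: multiplies by `α` the weight of every edge
entering `v`, by `α⁻¹` the weight of every edge leaving `v`, and leaves the
other coordinates unchanged. -/
def rescale (v : G.V) (α : ℝ) (θ : EuclideanSpace ℝ G.Edge) :
    EuclideanSpace ℝ G.Edge :=
  WithLp.toLp 2 fun e => if (e : G.V × G.V).2 = v then α * θ e
    else if (e : G.V × G.V).1 = v then α⁻¹ * θ e else θ e

/-- `Reaches a b` iff there is a directed path (possibly trivial) from `a` to `b`. -/
def Reaches (a b : G.V) : Prop :=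
  Relation.ReflTransGen (fun x y : G.V => (x, y) ∈ G.edges) a b

/-- The invariant set `H_G(c) = {θ : B̃ θ² = c}` inside Euclidean space `ℝ^E`. -/
def invariantSet (c : G.Hidden → ℝ) : Set (EuclideanSpace ℝ G.Edge) :=
  {θ | G.B.mulVec (fun e => θ e ^ 2) = c}

/-- `u : Fin (k+1) → V` is a directed path in `G`. -/
def IsPathFun {k : ℕ} (u : Fin (k + 1) → G.V) : Prop :=
  ∀ i : Fin k, (u i.castSucc, u i.succ) ∈ G.edges

/-- Pure ancestors of `v`: hidden ancestors `w` of `v` such that every directed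
path from `w` to an output node passes through `v` (this contains `v` itself
whenever `v` is hidden). -/
def pureAnc (v : G.V) : Set G.V :=
  {w | w ∈ G.hidden ∧ G.Reaches w v ∧
    ∀ (k : ℕ) (u : Fin (k + 1) → G.V), G.IsPathFun u → u 0 = w →
      u (Fin.last k) ∈ G.VO → ∃ i, u i = v}

/-- Pure descendants of `v`: hidden descendants `w` of `v` such that every
directed path from an input node to `w` passes through `v`. -/
def pureDesc (v : G.V) : Set G.V :=
  {w | w ∈ G.hidden ∧ G.Reaches v w ∧
    ∀ (k : ℕ) (u : Fin (k + 1) → G.V), G.IsPathFun u → u (Fin.last k) = w →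
      u 0 ∈ G.VI → ∃ i, u i = v}

/-- An out-bottleneck: a hidden node with exactly one outgoing edge. -/
def OutBottleneck (v : G.V) : Prop :=
  v ∈ G.hidden ∧ (G.edges.filter (fun e => e.1 = v)).card = 1

/-- An in-bottleneck: a hidden node with exactly one incoming edge. -/
def InBottleneck (v : G.V) : Prop :=
  v ∈ G.hidden ∧ (G.edges.filter (fun e => e.2 = v)).card = 1

/-- The projection sending each hidden node to itself and each
input/output node to the glued point `⋆ = none`. -/
def pi (v : G.V) : Option G.Hidden :=
  if h : v ∈ G.hidden then some ⟨v, h⟩ else none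

/-- The undirected graph on `Ṽ ⊔ {⋆}` with an edge between `π(u)` and `π(w)`
for each edge `(u,w)` of `G` with nonzero weight. -/
def quotGraph (θ : G.Edge → ℝ) : SimpleGraph (Option G.Hidden) :=
  SimpleGraph.fromRel (fun a b => ∃ e : G.Edge, θ e ≠ 0 ∧
    a = G.pi (e : G.V × G.V).1 ∧ b = G.pi (e : G.V × G.V).2)

end DagNet

/-!
Differentiating the invariance `L (T^v_α x) = L x` at `α = 1` gives the Euler-type identity
`DL(x)(x ⊙ b_v) = 0` for every `x`. Differentiating this identity once more in `x` yields
`D²L(θ)(w, θ ⊙ b_v) + DL(θ)(w ⊙ b_v) = 0` for every `w`; by symmetry of the second derivative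
and self-adjointness of `· ⊙ b_v`, this says that `Hess L(θ)(θ ⊙ b_v) + ∇L(θ) ⊙ b_v` is
orthogonal to every `w`.
-/

open InnerProductSpace

section Gradient

variable {E : Type*} [NormedAddCommGroup E] [InnerProductSpace ℝ E] [CompleteSpace E]

theorem fderiv_gradient_apply_add_eq_zero {L : E → ℝ} (hL : ContDiff ℝ 2 L)
    {A : E →L[ℝ] E} (hA : (A : E →ₗ[ℝ] E).IsSymmetric)
    (hLA : ∀ x, fderiv ℝ L x (A x) = 0) (θ : E) :
    fderiv ℝ (gradient L) θ (A θ) + A (gradient L θ) = 0 := by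
  set D := fderiv ℝ L
  have hLd : Differentiable ℝ L := hL.differentiable (by norm_num)
  have hDd : Differentiable ℝ D := (hL.fderiv_right (by norm_num)).differentiable one_ne_zero
  have hD2 : ∀ w, fderiv ℝ D θ w (A θ) + D θ (A w) = 0 := by
    intro w
    have hprod : HasFDerivAt (fun y => D y (A y))
        ((D θ).comp A + (fderiv ℝ D θ).flip (A θ)) θ :=
      (hDd θ).hasFDerivAt.clm_apply A.hasFDerivAt
    have hzero : HasFDerivAt (fun y => D y (A y)) (0 : E →L[ℝ] ℝ) θ := by
      simpa only [hLA] using hasFDerivAt_const (0 : ℝ) θ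
    simpa [add_comm] using congrArg (· w) (hprod.unique hzero)
  have hsymm : ∀ u w, fderiv ℝ D θ u w = fderiv ℝ D θ w u :=
    second_derivative_symmetric (fun y => (hLd y).hasFDerivAt) (hDd θ).hasFDerivAt
  have hgrad : ∀ u, fderiv ℝ (gradient L) θ u = (toDual ℝ E).symm (fderiv ℝ D θ u) := by
    intro u
    change fderiv ℝ ((toDual ℝ E).symm ∘ D) θ u = _
    rw [LinearIsometryEquiv.comp_fderiv]
    rfl
  set X := fderiv ℝ (gradient L) θ (A θ) + A (gradient L θ)
  have horth : ∀ w, ⟪X, w⟫_ℝ = 0 := by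
    intro w
    rw [inner_add_left, hgrad, toDual_symm_apply, hA.apply_clm, gradient, toDual_symm_apply, hsymm]
    exact hD2 w
  exact inner_self_eq_zero.mp (horth X)

end Gradient

section Hadamard

variable {ι : Type*} [Fintype ι]

def hadamardCLM (b : ι → ℝ) : EuclideanSpace ℝ ι →L[ℝ] EuclideanSpace ℝ ι :=
  LinearMap.toContinuousLinearMap
    { toFun := fun x => WithLp.toLp 2 fun e => x e * b e
      map_add' := fun x y => by ext e; exact add_mul (x e) (y e) (b e)
      map_smul' := fun c x => by ext e; exact mul_assoc c (x e) (b e) }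

theorem hadamardCLM_apply (b : ι → ℝ) (x : EuclideanSpace ℝ ι) (e : ι) :
    hadamardCLM b x e = x e * b e := rfl

theorem isSymmetric_hadamardCLM (b : ι → ℝ) :
    (hadamardCLM b : EuclideanSpace ℝ ι →ₗ[ℝ] EuclideanSpace ℝ ι).IsSymmetric := by
  intro x y
  simp only [ContinuousLinearMap.coe_coe, PiLp.inner_apply, RCLike.inner_apply, conj_trivial,
    hadamardCLM_apply]
  exact Finset.sum_congr rfl fun e _ => by ring

end Hadamard

namespace DagNet

variable (G : DagNet)

def incidenceRow (v : G.V) : G.Edge → ℝ := fun e =>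
  if (e : G.V × G.V).2 = v then 1
  else if (e : G.V × G.V).1 = v then -1 else 0

theorem rescale_one (v : G.V) (x : EuclideanSpace ℝ G.Edge) : G.rescale v 1 x = x := by
  ext e
  simp [rescale]

theorem hasDerivAt_rescale_one (v : G.V) (x : EuclideanSpace ℝ G.Edge) :
    HasDerivAt (fun α : ℝ => G.rescale v α x) (hadamardCLM (G.incidenceRow v) x) 1 := by
  have hcoord : ∀ e : G.Edge,
      HasDerivAt (fun α : ℝ => G.rescale v α x e) (x e * G.incidenceRow v e) 1 := by
    intro e
    by_cases hin : (e : G.V × G.V).2 = v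
    · simp only [rescale, incidenceRow, hin, if_true, mul_one]
      simpa using (hasDerivAt_id (1 : ℝ)).mul_const (x e)
    by_cases hout : (e : G.V × G.V).1 = v
    · simp only [rescale, incidenceRow, hin, hout, if_true, if_false]
      simpa using (hasDerivAt_inv (one_ne_zero : (1 : ℝ) ≠ 0)).mul_const (x e)
    · simp only [rescale, incidenceRow, hin, hout, if_false, mul_zero]
      exact hasDerivAt_const (1 : ℝ) (x e)
  exact (PiLp.continuousLinearEquiv 2 ℝ (fun _ : G.Edge => ℝ)).symm.hasFDerivAt.comp_hasDerivAt 1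
    (hasDerivAt_pi.mpr hcoord)

theorem fderiv_apply_hadamard_incidenceRow_eq_zero {v : G.V}
    {L : EuclideanSpace ℝ G.Edge → ℝ} (hL : Differentiable ℝ L)
    (hinv : ∀ θ (α : ℝ), 0 < α → L (G.rescale v α θ) = L θ) (x : EuclideanSpace ℝ G.Edge) :
    fderiv ℝ L x (hadamardCLM (G.incidenceRow v) x) = 0 := by
  have horbit : HasDerivAt (fun α : ℝ => L (G.rescale v α x))
      (fderiv ℝ L x (hadamardCLM (G.incidenceRow v) x)) 1 := by
    refine HasFDerivAt.comp_hasDerivAt 1 ?_ (G.hasDerivAt_rescale_one v x)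
    simpa only [rescale_one] using (hL x).hasFDerivAt
  have hconst : (fun α : ℝ => L (G.rescale v α x)) =ᶠ[nhds 1] fun _ => L x := by
    filter_upwards [Ioi_mem_nhds zero_lt_one] with α hα
    exact hinv x α hα
  exact horbit.unique ((hasDerivAt_const (1 : ℝ) (L x)).congr_of_eventuallyEq hconst)

end DagNet

theorem statement13_general (G : DagNet) (v : G.V)
    (L : EuclideanSpace ℝ G.Edge → ℝ) (hL : ContDiff ℝ 2 L)
    (hinv : ∀ (θ : EuclideanSpace ℝ G.Edge) (α : ℝ), 0 < α →
      L (G.rescale v α θ) = L θ)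
    (θ : EuclideanSpace ℝ G.Edge) :
    let b : EuclideanSpace ℝ G.Edge := WithLp.toLp 2 fun e =>
      if (e : G.V × G.V).2 = v then 1
      else if (e : G.V × G.V).1 = v then -1 else 0
    let hadb : EuclideanSpace ℝ G.Edge := WithLp.toLp 2 fun e => θ e * b e
    let gradb : EuclideanSpace ℝ G.Edge := WithLp.toLp 2 fun e => gradient L θ e * b e
    fderiv ℝ (gradient L) θ hadb + gradb = 0 :=
  fderiv_gradient_apply_add_eq_zero hL (isSymmetric_hadamardCLM (G.incidenceRow v))
    (G.fderiv_apply_hadamard_incidenceRow_eq_zero (hL.differentiable (by norm_num)) hinv) θ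

/-- if `L` is `C²` and invariant under the rescaling `T^v_α` at
a hidden node `v`, then `Hess L(θ)·(θ ⊙ b_v) + ∇L(θ) ⊙ b_v = 0`, where `b_v`
is the `v`-th row of `B̃` and `⊙` is the entrywise product. -/
theorem statement13 (G : DagNet) (v : G.V) (hv : v ∈ G.hidden)
    (L : EuclideanSpace ℝ G.Edge → ℝ) (hL : ContDiff ℝ 2 L)
    (hinv : ∀ (θ : EuclideanSpace ℝ G.Edge) (α : ℝ), 0 < α →
      L (G.rescale v α θ) = L θ)
    (θ : EuclideanSpace ℝ G.Edge) :
    let b : EuclideanSpace ℝ G.Edge := WithLp.toLp 2 fun e =>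
      if (e : G.V × G.V).2 = v then 1
      else if (e : G.V × G.V).1 = v then -1 else 0
    let hadb : EuclideanSpace ℝ G.Edge := WithLp.toLp 2 fun e => θ e * b e
    let gradb : EuclideanSpace ℝ G.Edge := WithLp.toLp 2 fun e => gradient L θ e * b e
    fderiv ℝ (gradient L) θ hadb + gradb = 0 :=
  statement13_general G v L hL hinv θ
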